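/- Let X, Y, Z be pointed topological spaces with Y compact and Z compact and exponentiable (e.g., Y and Z compact Hausdorff, or more specially locally compact compact). Then the associator κ : X ∧ (Y ∧ Z) → (X ∧ Y) ∧ Z is a pointed homeomorphism; in particular the smash product of compact Hausdorff pointed spaces is associative. -/

import Mathlib

open Topology

section SmashDefs

variable {X Y : Type*} [TopologicalSpace X] [TopologicalSpace Y]

/-- The relation on `X × Y` collapsing the wedge `X × {y₀} ∪ {x₀} × Y` to a point. -/
def smashRel (x₀ : X) (y₀ : Y) : X × Y → X × Y → Prop :=
  fun p q => p = q ∨ ((p.1 = x₀ ∨ p.2 = y₀) ∧ (q.1 = x₀ ∨ q.2 = y₀))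

/-- The smash product `X ∧ Y` of pointed spaces, as the quotient `(X × Y)/(X ∨ Y)`
collapsing the wedge to a point, with the quotient topology. -/
def Smash (x₀ : X) (y₀ : Y) : Type _ := Quot (smashRel x₀ y₀)

instance (x₀ : X) (y₀ : Y) : TopologicalSpace (Smash x₀ y₀) :=
  inferInstanceAs (TopologicalSpace (Quot _))

/-- Canonical projection `η : X × Y → X ∧ Y`. -/
def Smash.mk (x₀ : X) (y₀ : Y) (p : X × Y) : Smash x₀ y₀ := Quot.mk _ p

/-- Basepoint of the smash product. -/
def Smash.pt (x₀ : X) (y₀ : Y) : Smash x₀ y₀ := Smash.mk x₀ y₀ (x₀, y₀)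

end SmashDefs

/-- A topological space `A` is exponentiable (for the cartesian product) iff the
functor `− × A` preserves quotient maps. -/
def IsExponentiable (A : Type) [TopologicalSpace A] : Prop :=
  ∀ (B C : Type) (_ : TopologicalSpace B) (_ : TopologicalSpace C) (f : B → C),
    IsQuotientMap f → IsQuotientMap (fun p : B × A => (f p.1, p.2))

/-!
The associator and its inverse are both induced by the identity of `X × Y × Z`; the content is
their continuity. The associator is continuous because `X × (Y × Z) → X × (Y ∧ Z)` is a quotient
map for every `X`: `Y ∧ Z` collapses the wedge, which is compact since `Y` and `Z` are, and the
tube lemma shows that every saturated open set of `X × (Y × Z)` is a union of saturated open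
boxes. The inverse is continuous because `(X × Y) × Z → (X ∧ Y) × Z` is a quotient map, which is
exactly the exponentiability of `Z`.
-/

theorem Quot.preimage_image_mk_of_rel_imp_iff {B : Type*} {r : B → B → Prop} {V : Set B}
    (hV : ∀ p q, r p q → (p ∈ V ↔ q ∈ V)) : Quot.mk r ⁻¹' (Quot.mk r '' V) = V := by
  have hiff : ∀ a b, Relation.EqvGen r a b → (a ∈ V ↔ b ∈ V) := fun a b h => by
    induction h with
    | rel a b hab => exact hV a b hab
    | refl => rfl
    | symm _ _ _ ih => exact ih.symm
    | trans _ _ _ _ _ ih₁ ih₂ => exact ih₁.trans ih₂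
  ext p
  exact ⟨fun ⟨q, hq, hqp⟩ => (hiff q p (Quot.eqvGen_exact hqp)).mp hq, fun hp => ⟨p, hp, rfl⟩⟩

section Collapse

variable {X B : Type*} [TopologicalSpace X] [TopologicalSpace B] {K : Set B}

theorem IsCompact.exists_isOpen_prod_subset_superset_or_disjoint (hK : IsCompact K)
    {W : Set (X × B)} (hW : IsOpen W) (hsat : ∀ x, ∀ k ∈ K, ∀ k' ∈ K, (x, k) ∈ W → (x, k') ∈ W)
    {x : X} {b : B} (hxb : (x, b) ∈ W) :
    ∃ A V, IsOpen A ∧ IsOpen V ∧ x ∈ A ∧ b ∈ V ∧ A ×ˢ V ⊆ W ∧ (K ⊆ V ∨ Disjoint V K) := by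
  by_cases hxK : {x} ×ˢ K ⊆ W
  · have hsub : {x} ×ˢ insert b K ⊆ W := by
      rintro ⟨x', c⟩ ⟨rfl, rfl | hc⟩
      exacts [hxb, hxK ⟨rfl, hc⟩]
    obtain ⟨A, V, hA, hV, hxA, hbKV, hAV⟩ :=
      generalized_tube_lemma isCompact_singleton (hK.insert b) hW hsub
    exact ⟨A, V, hA, hV, hxA rfl, hbKV (Set.mem_insert b K), hAV,
      Or.inl ((Set.subset_insert b K).trans hbKV)⟩
  · obtain ⟨A, V, hA, hV, hxA, hbV, hAV⟩ := isOpen_prod_iff.mp hW x b hxb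
    refine ⟨A, V, hA, hV, hxA, hbV, hAV, Or.inr (Set.disjoint_left.mpr fun k hkV hkK => ?_)⟩
    refine hxK ?_
    rintro ⟨_, k'⟩ ⟨rfl, hk'⟩
    exact hsat _ k hkK k' hk' (hAV ⟨hxA, hkV⟩)

theorem IsCompact.isQuotientMap_prod_quotMk_collapse (hK : IsCompact K) {r : B → B → Prop}
    (hr : ∀ p q, r p q ↔ p = q ∨ p ∈ K ∧ q ∈ K) :
    IsQuotientMap (fun p : X × B => (p.1, Quot.mk r p.2)) := by
  refine ⟨.of_isOpen_preimage_iff_isOpen fun s =>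
    ⟨fun hW => ?_, fun hs => hs.preimage (by fun_prop)⟩, Function.surjective_id.prodMap Quot.mk_surjective⟩
  have hsat : ∀ x, ∀ k ∈ K, ∀ k' ∈ K, (x, Quot.mk r k) ∈ s → (x, Quot.mk r k') ∈ s :=
    fun x k hk k' hk' h => Quot.sound ((hr k k').mpr (Or.inr ⟨hk, hk'⟩)) ▸ h
  rw [isOpen_iff_forall_mem_open]
  rintro ⟨x, w⟩ hxw
  induction w using Quot.ind with | mk b => ?_
  obtain ⟨A, V, hA, hV, hxA, hbV, hAV, hKV⟩ :=
    hK.exists_isOpen_prod_subset_superset_or_disjoint hW hsat hxw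
  have hVsat : Quot.mk r ⁻¹' (Quot.mk r '' V) = V := by
    refine Quot.preimage_image_mk_of_rel_imp_iff fun p q hpq => ?_
    rcases (hr p q).mp hpq with rfl | ⟨hp, hq⟩
    · rfl
    rcases hKV with hKV | hKV
    · exact iff_of_true (hKV hp) (hKV hq)
    · exact iff_of_false (Set.disjoint_right.mp hKV hp) (Set.disjoint_right.mp hKV hq)
  refine ⟨A ×ˢ (Quot.mk r '' V), ?_, hA.prod ?_, hxA, b, hbV, rfl⟩
  · rintro ⟨x', _⟩ ⟨hx', v, hv, rfl⟩
    exact hAV (Set.mk_mem_prod hx' hv)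
  · exact isQuotientMap_quot_mk.isOpen_preimage.mp (hVsat.symm ▸ hV)

end Collapse

namespace Smash

section

variable {X Y Z : Type*} (x₀ : X) (y₀ : Y) (z₀ : Z)

variable {x₀ y₀} in
theorem mk_eq_pt {p : X × Y} (hp : p.1 = x₀ ∨ p.2 = y₀) : Smash.mk x₀ y₀ p = Smash.pt x₀ y₀ :=
  Quot.sound (Or.inr ⟨hp, Or.inl rfl⟩)

def lift {γ : Sort*} (f : X × Y → γ) (hf : ∀ p : X × Y, p.1 = x₀ ∨ p.2 = y₀ → f p = f (x₀, y₀)) :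
    Smash x₀ y₀ → γ :=
  Quot.lift f <| by
    rintro p q (rfl | ⟨hp, hq⟩)
    exacts [rfl, (hf p hp).trans (hf q hq).symm]

theorem mk_mk_left_eq_pt {x : X} {y : Y} {z : Z} (h : x = x₀ ∨ y = y₀ ∨ z = z₀) :
    Smash.mk (Smash.pt x₀ y₀) z₀ (Smash.mk x₀ y₀ (x, y), z) = Smash.pt (Smash.pt x₀ y₀) z₀ := by
  rcases h with h | h | h
  · rw [mk_eq_pt (p := (x, y)) (Or.inl h)]
    exact mk_eq_pt (Or.inl rfl)
  · rw [mk_eq_pt (p := (x, y)) (Or.inr h)]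
    exact mk_eq_pt (Or.inl rfl)
  · exact mk_eq_pt (Or.inr h)

theorem mk_mk_right_eq_pt {x : X} {y : Y} {z : Z} (h : x = x₀ ∨ y = y₀ ∨ z = z₀) :
    Smash.mk x₀ (Smash.pt y₀ z₀) (x, Smash.mk y₀ z₀ (y, z)) = Smash.pt x₀ (Smash.pt y₀ z₀) := by
  rcases h with h | h | h
  · exact mk_eq_pt (Or.inl h)
  · rw [mk_eq_pt (p := (y, z)) (Or.inl h)]
    exact mk_eq_pt (Or.inr rfl)
  · rw [mk_eq_pt (p := (y, z)) (Or.inr h)]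
    exact mk_eq_pt (Or.inr rfl)

def assocProd (p : X × Smash y₀ z₀) : Smash (Smash.pt x₀ y₀) z₀ :=
  lift y₀ z₀ (fun q => Smash.mk _ z₀ (Smash.mk x₀ y₀ (p.1, q.1), q.2))
    (fun _ hq => (mk_mk_left_eq_pt x₀ y₀ z₀ (Or.inr hq)).trans
      (mk_mk_left_eq_pt x₀ y₀ z₀ (Or.inr (Or.inl rfl))).symm) p.2

def assocInvProd (p : Smash x₀ y₀ × Z) : Smash x₀ (Smash.pt y₀ z₀) :=
  lift x₀ y₀ (fun q => Smash.mk x₀ _ (q.1, Smash.mk y₀ z₀ (q.2, p.2)))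
    (fun _ hq => (mk_mk_right_eq_pt x₀ y₀ z₀ (hq.imp_right Or.inl)).trans
      (mk_mk_right_eq_pt x₀ y₀ z₀ (Or.inl rfl)).symm) p.1

def assoc : Smash x₀ (Smash.pt y₀ z₀) → Smash (Smash.pt x₀ y₀) z₀ :=
  lift x₀ (Smash.pt y₀ z₀) (assocProd x₀ y₀ z₀) <| by
    rintro ⟨x, w⟩ h
    refine Eq.trans ?_ (mk_mk_left_eq_pt x₀ y₀ z₀ (Or.inl rfl)).symm
    rcases h with h | (rfl : w = _)
    · induction w using Quot.ind with
      | mk _ => exact mk_mk_left_eq_pt x₀ y₀ z₀ (Or.inl h)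
    · exact mk_mk_left_eq_pt x₀ y₀ z₀ (Or.inr (Or.inl rfl))

def assocInv : Smash (Smash.pt x₀ y₀) z₀ → Smash x₀ (Smash.pt y₀ z₀) :=
  lift (Smash.pt x₀ y₀) z₀ (assocInvProd x₀ y₀ z₀) <| by
    rintro ⟨w, z⟩ h
    refine Eq.trans ?_ (mk_mk_right_eq_pt x₀ y₀ z₀ (Or.inl rfl)).symm
    rcases h with (rfl : w = _) | h
    · exact mk_mk_right_eq_pt x₀ y₀ z₀ (Or.inl rfl)
    · induction w using Quot.ind with
      | mk _ => exact mk_mk_right_eq_pt x₀ y₀ z₀ (Or.inr (Or.inr h))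

def assocEquiv : Smash x₀ (Smash.pt y₀ z₀) ≃ Smash (Smash.pt x₀ y₀) z₀ where
  toFun := assoc x₀ y₀ z₀
  invFun := assocInv x₀ y₀ z₀
  left_inv := by
    rintro ⟨x, ⟨q⟩⟩
    rfl
  right_inv := by
    rintro ⟨⟨q⟩, z⟩
    rfl

variable [TopologicalSpace X] [TopologicalSpace Y] [TopologicalSpace Z]

theorem isQuotientMap_mk : IsQuotientMap (Smash.mk x₀ y₀) := isQuotientMap_quot_mk

@[fun_prop]
theorem continuous_mk : Continuous (Smash.mk x₀ y₀) := continuous_quot_mk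

theorem continuous_lift {γ : Type*} [TopologicalSpace γ] {f : X × Y → γ} (hf_cont : Continuous f)
    (hf : ∀ p : X × Y, p.1 = x₀ ∨ p.2 = y₀ → f p = f (x₀, y₀)) : Continuous (lift x₀ y₀ f hf) :=
  continuous_quot_lift _ hf_cont

theorem isCompact_wedge [CompactSpace X] [CompactSpace Y] :
    IsCompact {p : X × Y | p.1 = x₀ ∨ p.2 = y₀} := by
  have hwedge : {p : X × Y | p.1 = x₀ ∨ p.2 = y₀} = {x₀} ×ˢ Set.univ ∪ Set.univ ×ˢ {y₀} := by
    ext p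
    simp
  rw [hwedge]
  exact (isCompact_singleton.prod isCompact_univ).union (isCompact_univ.prod isCompact_singleton)

theorem isQuotientMap_prod_mk (W : Type*) [TopologicalSpace W] [CompactSpace X] [CompactSpace Y] :
    IsQuotientMap (fun p : W × (X × Y) => (p.1, Smash.mk x₀ y₀ p.2)) :=
  (isCompact_wedge x₀ y₀).isQuotientMap_prod_quotMk_collapse fun _ _ => Iff.rfl

theorem continuous_assoc [CompactSpace Y] [CompactSpace Z] : Continuous (assoc x₀ y₀ z₀) := by
  refine continuous_lift _ _ ?_ _
  rw [(isQuotientMap_prod_mk y₀ z₀ X).continuous_iff]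
  change Continuous fun p : X × (Y × Z) =>
    Smash.mk (Smash.pt x₀ y₀) z₀ (Smash.mk x₀ y₀ (p.1, p.2.1), p.2.2)
  fun_prop

end

theorem continuous_assocInv {X Y Z : Type} [TopologicalSpace X] [TopologicalSpace Y]
    [TopologicalSpace Z] (x₀ : X) (y₀ : Y) (z₀ : Z) (hZ : IsExponentiable Z) :
    Continuous (assocInv x₀ y₀ z₀) := by
  refine continuous_lift _ _ ?_ _
  rw [(hZ _ _ _ _ _ (isQuotientMap_mk x₀ y₀)).continuous_iff]
  change Continuous fun p : (X × Y) × Z =>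
    Smash.mk x₀ (Smash.pt y₀ z₀) (p.1.1, Smash.mk y₀ z₀ (p.1.2, p.2))
  fun_prop

end Smash

/-- If `Y` is compact and `Z` is compact and exponentiable, the triple `(X, Y, Z)` is
(regularly) associative: the associator `κ : X ∧ (Y ∧ Z) → (X ∧ Y) ∧ Z` is a pointed
homeomorphism. In particular the smash product of compact Hausdorff pointed spaces
is associative. -/
theorem smash_assoc_of_compact {X Y Z : Type} [TopologicalSpace X] [TopologicalSpace Y]
    [TopologicalSpace Z] (x₀ : X) (y₀ : Y) (z₀ : Z)
    (hY : CompactSpace Y) (hZc : CompactSpace Z) (hZ : IsExponentiable Z) :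
    ∃ h : Smash x₀ (Smash.pt y₀ z₀) ≃ₜ Smash (Smash.pt x₀ y₀) z₀,
      h (Smash.pt x₀ (Smash.pt y₀ z₀)) = Smash.pt (Smash.pt x₀ y₀) z₀ ∧
      ∀ (x : X) (y : Y) (z : Z),
        h (Smash.mk _ _ (x, Smash.mk y₀ z₀ (y, z))) =
          Smash.mk _ _ (Smash.mk x₀ y₀ (x, y), z) :=
  ⟨{ Smash.assocEquiv x₀ y₀ z₀ with
      continuous_toFun := Smash.continuous_assoc x₀ y₀ z₀
      continuous_invFun := Smash.continuous_assocInv x₀ y₀ z₀ hZ },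
    rfl, fun _ _ _ => rfl⟩
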